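/- arXiv:2002.05889 — 4 statements merged into one kernel-verified Lean document; each statement's English description precedes it below -/
import Mathlib

section
/- Let $a<b$ be real numbers and let $v\colon[a,b]\to\mathbb{R}$ be continuous on $[a,b]$ and differentiable at every point of $[a,b]$ with derivative $v'$, and assume that $v'$ is square-integrable on $[a,b]$ and interval-integrable on $[a,b]$. Set $v_0=\min_{[a,b]}v$, $v_1=\max_{[a,b]}v$, and $\tilde I=\{\,s\in[a,b]\mid v_0<v(s)<v_1\,\}$. Then $\int_{\tilde I}\big(v(s)-v_0\big)^2\,ds\le |\tilde I|^2\int_{\tilde I}(v'(s))^2\,ds$, where $|\tilde I|$ denotes the Lebesgue measure of $\tilde I$. -/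
/-!
Off `I` the function `v` sits at its minimum or its maximum, and on a level set `v'` vanishes
except at the countably many points isolated from the right. Hence, with `x₀` a minimum point,
for `s ∈ I` we get `|v s - v0| = |∫ x₀..s, v'| ≤ ∫ in I, |v'| ≤ (|I| ∫ in I, v'²)^(1/2)` by
Cauchy–Schwarz, and integrating the square of this pointwise bound over `I` gives the claim.
-/

open MeasureTheory Set
open Filter Topology
open scoped Interval ENNReal

theorem ae_eq_zero_of_hasDerivAt_of_const_on {F : Type*} [NormedAddCommGroup F]
    [NormedSpace ℝ F] {f f' : ℝ → F} {A : Set ℝ} {c : F} (hfA : ∀ x ∈ A, f x = c)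
    (hf : ∀ x ∈ A, HasDerivAt f (f' x) x) : ∀ᵐ x, x ∈ A → f' x = 0 := by
  refine ae_iff.2 <| measure_mono_null ?_ <|
    (countable_setOfPred_isolated_right_within (s := A)).measure_zero volume
  -- a point of `A` where `f' x ≠ 0` is isolated from the right in `A`
  intro x hx
  obtain ⟨hxA, hx⟩ := Classical.not_imp.1 hx
  have hne : ∀ᶠ y in 𝓝[A ∩ Ioi x] x, f y ≠ c :=
    nhdsWithin_mono x (fun y hy => ne_of_gt hy.2) ((hf x hxA).eventually_ne hx)
  refine ⟨hxA, empty_mem_iff_bot.mp ?_⟩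
  filter_upwards [hne, self_mem_nhdsWithin] with y hyc hyA
  exact hyc (hfA y hyA.1)

theorem sq_integral_abs_le_measureReal_mul_integral_sq {α : Type*} [MeasurableSpace α]
    {μ : Measure α} [IsFiniteMeasure μ] {f : α → ℝ} (hf : Integrable (fun x => f x ^ 2) μ) :
    (∫ x, |f x| ∂μ) ^ 2 ≤ μ.real univ * ∫ x, f x ^ 2 ∂μ := by
  -- `f` itself need not be measurable, but `|f| = √(f ^ 2)` is
  have hmeas : AEStronglyMeasurable (fun x => |f x|) μ := by
    simpa only [Real.sqrt_sq_eq_abs] using hf.1.aemeasurable.sqrt.aestronglyMeasurable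
  have hmem : MemLp (fun x => |f x|) 2 μ :=
    (memLp_two_iff_integrable_sq hmeas).2 (by simpa only [sq_abs] using hf)
  have hHolder := integral_mul_le_Lp_mul_Lq_of_nonneg (μ := μ) Real.HolderConjugate.two_two
    (f := fun _ => (1 : ℝ)) (g := fun x => |f x|) (ae_of_all _ fun _ => zero_le_one)
    (ae_of_all _ fun x => abs_nonneg (f x)) (by simpa using memLp_const (μ := μ) (p := 2) (1 : ℝ))
    (by simpa using hmem)
  simp only [one_mul, integral_const, smul_eq_mul, Real.rpow_two, one_pow, mul_one, sq_abs,
    ← Real.sqrt_eq_rpow, ← Real.sqrt_mul measureReal_nonneg] at hHolder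
  exact (Real.le_sqrt (integral_nonneg fun x => abs_nonneg (f x))
    (mul_nonneg measureReal_nonneg (integral_nonneg fun x => sq_nonneg (f x)))).1 hHolder

theorem abs_sub_le_setIntegral_abs_deriv {v v' : ℝ → ℝ} {a b x y : ℝ}
    (hderiv : ∀ s ∈ Icc a b, HasDerivAt v (v' s) s) (hint : IntervalIntegrable v' volume a b)
    (hx : x ∈ Icc a b) (hy : y ∈ Icc a b) :
    |v y - v x| ≤ ∫ s in Icc a b, |v' s| := by
  have hsub : uIcc x y ⊆ Icc a b := uIcc_subset_Icc hx hy
  have hv' : IntegrableOn v' (Icc a b) := (integrableOn_Icc_iff_integrableOn_Ioc).2 hint.1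
  calc |v y - v x| = ‖∫ s in x..y, v' s‖ := by
        rw [intervalIntegral.integral_eq_sub_of_hasDerivAt (fun s hs => hderiv s (hsub hs))
          (hint.mono_set (hsub.trans Icc_subset_uIcc)), Real.norm_eq_abs]
    _ ≤ ∫ s in Ι x y, ‖v' s‖ := intervalIntegral.norm_integral_le_integral_norm_uIoc
    _ ≤ ∫ s in Icc a b, |v' s| := setIntegral_mono_set hv'.abs (ae_of_all _ fun s => abs_nonneg _)
        (uIoc_subset_uIcc.trans hsub).eventuallyLE

theorem setIntegral_sq_sub_le_of_ae_deriv_eq_zero_off {v v' : ℝ → ℝ} {a b x₀ : ℝ} {S : Set ℝ}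
    (hderiv : ∀ s ∈ Icc a b, HasDerivAt v (v' s) s) (hint : IntervalIntegrable v' volume a b)
    (hsq : IntegrableOn (fun s => v' s ^ 2) S) (hS : S ⊆ Icc a b)
    (hzero : ∀ᵐ s, s ∈ Icc a b \ S → v' s = 0) (hx₀ : x₀ ∈ Icc a b) :
    ∫ s in S, (v s - v x₀) ^ 2 ≤ (volume S).toReal ^ 2 * ∫ s in S, v' s ^ 2 := by
  have hfin : volume S < ∞ := (measure_mono hS).trans_lt measure_Icc_lt_top
  have : IsFiniteMeasure (volume.restrict S) := isFiniteMeasure_restrict.2 hfin.ne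
  have hCS := sq_integral_abs_le_measureReal_mul_integral_sq hsq
  rw [measureReal_restrict_apply_univ] at hCS
  have hS_abs : ∫ s in Icc a b, |v' s| = ∫ s in S, |v' s| :=
    setIntegral_eq_of_subset_of_ae_sdiff_eq_zero measurableSet_Icc.nullMeasurableSet hS
      (hzero.mono fun s h hs => by rw [h hs, abs_zero])
  have hpt : ∀ s ∈ S, ‖(v s - v x₀) ^ 2‖ ≤ volume.real S * ∫ s in S, v' s ^ 2 := by
    intro s hs
    have hosc := hS_abs ▸ abs_sub_le_setIntegral_abs_deriv hderiv hint hx₀ (hS hs)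
    rw [Real.norm_of_nonneg (sq_nonneg _), ← sq_abs]
    exact (pow_le_pow_left₀ (abs_nonneg _) hosc 2).trans hCS
  calc ∫ s in S, (v s - v x₀) ^ 2 ≤ ‖∫ s in S, (v s - v x₀) ^ 2‖ := Real.le_norm_self _
    _ ≤ volume.real S * (∫ s in S, v' s ^ 2) * volume.real S :=
        norm_setIntegral_le_of_norm_le_const hfin hpt
    _ = (volume S).toReal ^ 2 * ∫ s in S, v' s ^ 2 := by rw [measureReal_def]; ring

theorem poincare_type_interval_general (a b : ℝ) (hab : a < b) (v v' : ℝ → ℝ)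
    (hderiv : ∀ s ∈ Icc a b, HasDerivAt v (v' s) s)
    (hsq : IntegrableOn (fun s => (v' s) ^ 2) (Icc a b) volume)
    (hint : IntervalIntegrable v' volume a b)
    (v0 v1 : ℝ)
    (hv0 : v0 = sInf (v '' Icc a b)) (hv1 : v1 = sSup (v '' Icc a b))
    (I : Set ℝ) (hI : I = {s ∈ Icc a b | v0 < v s ∧ v s < v1}) :
    ∫ s in I, (v s - v0) ^ 2 ≤ (volume I).toReal ^ 2 * ∫ s in I, (v' s) ^ 2 := by
  have himg : IsCompact (v '' Icc a b) := isCompact_Icc.image_of_continuousOn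
    fun s hs => (hderiv s hs).continuousAt.continuousWithinAt
  obtain ⟨x₀, hx₀, rfl⟩ : v0 ∈ v '' Icc a b :=
    hv0 ▸ himg.sInf_mem ((nonempty_Icc.2 hab.le).image v)
  have hextremal : ∀ s ∈ Icc a b \ I, v s = v x₀ ∨ v s = v1 := by
    rintro s ⟨hs, hsI⟩
    have hmin : v x₀ ≤ v s := hv0 ▸ csInf_le himg.bddBelow (mem_image_of_mem v hs)
    have hmax : v s ≤ v1 := hv1 ▸ le_csSup himg.bddAbove (mem_image_of_mem v hs)
    rw [hI] at hsI
    by_contra! h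
    exact hsI ⟨hs, hmin.lt_of_ne h.1.symm, hmax.lt_of_ne h.2⟩
  have hzero : ∀ᵐ s, s ∈ Icc a b \ I → v' s = 0 := by
    filter_upwards [ae_eq_zero_of_hasDerivAt_of_const_on (A := {s ∈ Icc a b | v s = v x₀})
        (fun s hs => hs.2) (fun s hs => hderiv s hs.1),
      ae_eq_zero_of_hasDerivAt_of_const_on (A := {s ∈ Icc a b | v s = v1})
        (fun s hs => hs.2) (fun s hs => hderiv s hs.1)] with s hmin hmax hs
    rcases hextremal s hs with h | h
    exacts [hmin ⟨hs.1, h⟩, hmax ⟨hs.1, h⟩]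
  have hIsub : I ⊆ Icc a b := hI ▸ fun s hs => hs.1
  exact setIntegral_sq_sub_le_of_ae_deriv_eq_zero_off hderiv hint (hsq.mono_set hIsub) hIsub
    hzero hx₀

/-- Poincaré-type inequality in a bounded interval. -/
theorem poincare_type_interval (a b : ℝ) (hab : a < b) (v v' : ℝ → ℝ)
    (hcont : ContinuousOn v (Icc a b))
    (hderiv : ∀ s ∈ Icc a b, HasDerivAt v (v' s) s)
    (hsq : IntegrableOn (fun s => (v' s) ^ 2) (Icc a b) volume)
    (hint : IntervalIntegrable v' volume a b)
    (v0 v1 : ℝ)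
    (hv0 : v0 = sInf (v '' Icc a b)) (hv1 : v1 = sSup (v '' Icc a b))
    (I : Set ℝ) (hI : I = {s ∈ Icc a b | v0 < v s ∧ v s < v1}) :
    ∫ s in I, (v s - v0) ^ 2 ≤ (volume I).toReal ^ 2 * ∫ s in I, (v' s) ^ 2 :=
  poincare_type_interval_general a b hab v v' hderiv hsq hint v0 v1 hv0 hv1 I hI
end

section
/- Let $v\colon\mathbb{R}\to\mathbb{R}$ be differentiable at every point, with derivative $v'$. Then for every constant $c\in\mathbb{R}$, $v'(s)=0$ for Lebesgue-almost every $s$ in the level set $\{\,s\in\mathbb{R}\mid v(s)=c\,\}$. -/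
open MeasureTheory Set

/-- The derivative of a differentiable real function of one variable vanishes
almost everywhere on any level set (Gilbarg–Trudinger, Lemma 7.7). -/
theorem deriv_ae_zero_on_level_set (v v' : ℝ → ℝ)
    (hderiv : ∀ s : ℝ, HasDerivAt v (v' s) s) :
    ∀ c : ℝ, volume {s : ℝ | v s = c ∧ v' s ≠ 0} = 0 := by
  intro c
  set A : Set ℝ := {s : ℝ | v s = c ∧ v' s ≠ 0} with hA
  have hcount : A.Countable := by
    have key : ∀ x ∈ A, ({x} : Set ℝ) ∈ nhdsWithin x A := by
      intro x hx
      have hne : ∀ᶠ z in nhdsWithin x {x}ᶜ, v z ≠ v x :=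
        (hderiv x).eventually_ne hx.2
      rw [eventually_nhdsWithin_iff] at hne
      rw [mem_nhdsWithin_iff_eventually]
      filter_upwards [hne] with z hz hzA
      by_contra h
      exact (hz h) (hzA.1.trans hx.1.symm)
    obtain ⟨t, hts, htc, hcov⟩ := TopologicalSpace.countable_cover_nhdsWithin key
    have : A ⊆ t := by
      intro x hx
      obtain ⟨y, hy, hxy⟩ := mem_iUnion₂.1 (hcov hx)
      rwa [mem_singleton_iff.1 hxy]
    exact htc.mono this
  exact hcount.measure_zero _
end

section
/- Let $L>0$, $d\ge 2$, and let $r\colon[0,L]\to\mathbb{R}^d$ be continuously differentiable with $|r'(s)|=1$ for all $s\in[0,L]$. Let $w\colon\mathbb{R}^d\to\mathbb{R}$ be such that the composition $v=w\circ r$ is continuous on $[0,L]$, differentiable at every point of $[0,L]$ with derivative $v'$, and $v'$ is square-integrable and interval-integrable on $[0,L]$. Set $w_0=\min_{[0,L]}v$, $w_1=\max_{[0,L]}v$, and $\tilde I=\{\,s\in[0,L]\mid w_0<v(s)<w_1\,\}$. Then $\int_{\tilde I}\big(w(r(s))-w_0\big)^2\,ds\le|\tilde I|^2\int_{\tilde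 I}\big|v'(s)\big|^2\,ds$, where $|\tilde I|$ denotes the Lebesgue measure of $\tilde I$. -/
/-!
Let `x₀` minimise `f` on `[a, b]`, so `m = f x₀`. An interior point of `[a, b]` outside the band
`{m < f < M}` is a global extremum of `f` on `[a, b]`, hence `f'` vanishes there and
`∫_{[a,b]} |f'| = ∫_I |f'|`. By the fundamental theorem of calculus, `0 ≤ f x - m ≤ ∫_I |f'|` on
the band `I`, and Cauchy–Schwarz gives `(∫_I |f'|)² ≤ |I| ∫_I |f'|²`. Integrating the square of the
first bound over `I` yields the inequality.
-/

open MeasureTheory Set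

theorem sq_integral_le_measureReal_mul_integral_sq {α : Type*} [MeasurableSpace α]
    {μ : Measure α} [IsFiniteMeasure μ] {g : α → ℝ} (hg : MemLp g 2 μ) :
    (∫ x, g x ∂μ) ^ 2 ≤ μ.real univ * ∫ x, g x ^ 2 ∂μ := by
  set m := μ.real univ
  set c := ∫ x, g x ∂μ
  have hg1 : Integrable g μ := hg.integrable one_le_two
  have hlin : Integrable (fun x => 2 * m * c * g x - c ^ 2) μ :=
    (hg1.const_mul _).sub (integrable_const _)
  have hvar : ∫ x, (m * g x - c) ^ 2 ∂μ = m * (m * ∫ x, g x ^ 2 ∂μ - c ^ 2) := by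
    have hexpand : ∀ x, (m * g x - c) ^ 2 = m ^ 2 * g x ^ 2 - (2 * m * c * g x - c ^ 2) :=
      fun x => by ring
    simp only [hexpand]
    rw [integral_sub (hg.integrable_sq.const_mul _) hlin,
      integral_sub (hg1.const_mul _) (integrable_const _), integral_const_mul, integral_const_mul,
      integral_const, smul_eq_mul]
    ring
  rcases (measureReal_nonneg : 0 ≤ m).eq_or_lt with hm | hm
  · have : μ = 0 := Measure.measure_univ_eq_zero.1 ((measureReal_eq_zero_iff).1 hm.symm)
    simp [c, this]
  · have hnonneg := hvar ▸ integral_nonneg fun x => sq_nonneg (m * g x - c)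
    nlinarith [(mul_nonneg_iff_of_pos_left hm).1 hnonneg]

def levelBand (f : ℝ → ℝ) (a b m M : ℝ) : Set ℝ := {x ∈ Icc a b | m < f x ∧ f x < M}

section levelBand

variable {f f' : ℝ → ℝ} {a b m M : ℝ}

theorem levelBand_subset_Icc : levelBand f a b m M ⊆ Icc a b := sep_subset _ _

theorem measurableSet_levelBand (hf : ContinuousOn f (Icc a b)) :
    MeasurableSet (levelBand f a b m M) := by
  obtain ⟨u, hu, hfu⟩ := continuousOn_iff'.1 hf (Ioo m M) isOpen_Ioo
  have hband : levelBand f a b m M = u ∩ Icc a b := by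
    rw [← hfu, inter_comm]
    rfl
  exact hband ▸ hu.measurableSet.inter measurableSet_Icc

theorem sub_le_setIntegral_Icc_abs_deriv (hderiv : ∀ x ∈ Icc a b, HasDerivAt f (f' x) x)
    (hint : IntervalIntegrable f' volume a b) {x y : ℝ} (hx : x ∈ Icc a b) (hy : y ∈ Icc a b) :
    f y - f x ≤ ∫ t in Icc a b, |f' t| := by
  have hsub : uIcc x y ⊆ Icc a b := uIcc_subset_Icc hx hy
  have hab : a ≤ b := hx.1.trans hx.2
  have hftc : ∫ t in x..y, f' t = f y - f x :=
    intervalIntegral.integral_eq_sub_of_hasDerivAt (fun t ht => hderiv t (hsub ht))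
      (hint.mono_set (by rwa [uIcc_of_le hab]))
  calc f y - f x = ∫ t in x..y, f' t := hftc.symm
    _ ≤ ‖∫ t in x..y, f' t‖ := le_abs_self _
    _ ≤ ∫ t in uIoc x y, ‖f' t‖ := intervalIntegral.norm_integral_le_integral_norm_uIoc
    _ ≤ ∫ t in Icc a b, |f' t| :=
      setIntegral_mono_set ((intervalIntegrable_iff_integrableOn_Icc_of_le hab).1 hint).abs
        (ae_of_all _ fun t => abs_nonneg _) (uIoc_subset_uIcc.trans hsub).eventuallyLE

theorem setIntegral_Icc_abs_deriv_eq_setIntegral_levelBand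
    (hm : ∀ x ∈ Icc a b, m ≤ f x) (hM : ∀ x ∈ Icc a b, f x ≤ M)
    (hderiv : ∀ x ∈ Ioo a b, HasDerivAt f (f' x) x) :
    ∫ x in Icc a b, |f' x| = ∫ x in levelBand f a b m M, |f' x| := by
  refine setIntegral_eq_of_subset_of_ae_sdiff_eq_zero measurableSet_Icc.nullMeasurableSet
    levelBand_subset_Icc ?_
  filter_upwards [(Ioo_ae_eq_Icc (a := a) (b := b)).mem_iff] with x hIoo ⟨hx, hband⟩
  have hx' : x ∈ Ioo a b := hIoo.2 hx
  have hnhds : Icc a b ∈ nhds x := Icc_mem_nhds hx'.1 hx'.2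
  rw [abs_eq_zero]
  rcases not_and_or.1 (fun h => hband ⟨hx, h⟩) with hmin | hmax
  · have : IsMinOn f (Icc a b) x := fun y hy => (not_lt.1 hmin).trans (hm y hy)
    exact (this.isLocalMin hnhds).hasDerivAt_eq_zero (hderiv x hx')
  · have : IsMaxOn f (Icc a b) x := fun y hy => (hM y hy).trans (not_lt.1 hmax)
    exact (this.isLocalMax hnhds).hasDerivAt_eq_zero (hderiv x hx')

theorem setIntegral_levelBand_sub_sq_le (hm : IsLeast (f '' Icc a b) m)
    (hM : ∀ x ∈ Icc a b, f x ≤ M) (hderiv : ∀ x ∈ Icc a b, HasDerivAt f (f' x) x)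
    (hsq : IntegrableOn (fun x => f' x ^ 2) (Icc a b)) (hint : IntervalIntegrable f' volume a b) :
    ∫ x in levelBand f a b m M, (f x - m) ^ 2 ≤
      volume.real (levelBand f a b m M) ^ 2 * ∫ x in levelBand f a b m M, |f' x| ^ 2 := by
  set I := levelBand f a b m M
  have hf : ContinuousOn f (Icc a b) := fun x hx => (hderiv x hx).continuousAt.continuousWithinAt
  have hfin : volume I ≠ ⊤ :=
    ((measure_mono levelBand_subset_Icc).trans_lt measure_Icc_lt_top).ne
  have hm_le : ∀ x ∈ Icc a b, m ≤ f x := fun x hx => hm.2 (mem_image_of_mem f hx)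
  obtain ⟨x₀, hx₀, rfl⟩ := hm.1
  have hosc : ∀ x ∈ I, f x - f x₀ ≤ ∫ t in I, |f' t| := fun x hx => by
    rw [← setIntegral_Icc_abs_deriv_eq_setIntegral_levelBand hm_le hM
      fun t ht => hderiv t (Ioo_subset_Icc_self ht)]
    exact sub_le_setIntegral_Icc_abs_deriv hderiv hint hx₀ (levelBand_subset_Icc hx)
  have hL2 : MemLp f' 2 (volume.restrict I) := by
    have hf' : IntegrableOn f' I :=
      ((intervalIntegrable_iff_integrableOn_Icc_of_le (hx₀.1.trans hx₀.2)).1 hint).mono_set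
        levelBand_subset_Icc
    exact (memLp_two_iff_integrable_sq hf'.1).2 (hsq.mono_set levelBand_subset_Icc)
  have hCS : (∫ t in I, |f' t|) ^ 2 ≤ volume.real I * ∫ t in I, |f' t| ^ 2 := by
    have := isFiniteMeasure_restrict.2 hfin
    simpa only [measureReal_restrict_apply_univ, Real.norm_eq_abs] using
      sq_integral_le_measureReal_mul_integral_sq hL2.norm
  calc ∫ x in I, (f x - f x₀) ^ 2
      ≤ ∫ _ in I, volume.real I * ∫ t in I, |f' t| ^ 2 := by
        refine setIntegral_mono_on ?_ (integrableOn_const hfin) (measurableSet_levelBand hf)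
          fun x hx => ?_
        · exact (((hf.sub continuousOn_const).pow 2).integrableOn_compact isCompact_Icc).mono_set
            levelBand_subset_Icc
        · exact (pow_le_pow_left₀ (sub_nonneg.2 (hm_le x hx.1)) (hosc x hx) 2).trans hCS
    _ = volume.real I ^ 2 * ∫ t in I, |f' t| ^ 2 := by
        rw [setIntegral_const, smul_eq_mul, ← mul_assoc, sq]

end levelBand

theorem poincare_type_curve_general (L : ℝ) (hL : 0 < L) (d : ℕ)
    (r : ℝ → EuclideanSpace ℝ (Fin d))
    (w : EuclideanSpace ℝ (Fin d) → ℝ)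
    (v v' : ℝ → ℝ) (hv : ∀ s, v s = w (r s))
    (hcont : ContinuousOn v (Icc (0 : ℝ) L))
    (hderiv : ∀ s ∈ Icc (0 : ℝ) L, HasDerivAt v (v' s) s)
    (hsq : IntegrableOn (fun s => (v' s) ^ 2) (Icc (0 : ℝ) L) volume)
    (hint : IntervalIntegrable v' volume 0 L)
    (w0 w1 : ℝ)
    (hw0 : w0 = sInf (v '' Icc (0 : ℝ) L)) (hw1 : w1 = sSup (v '' Icc (0 : ℝ) L))
    (I : Set ℝ) (hI : I = {s ∈ Icc (0 : ℝ) L | w0 < v s ∧ v s < w1}) :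
    ∫ s in I, (w (r s) - w0) ^ 2 ≤ (volume I).toReal ^ 2 * ∫ s in I, |v' s| ^ 2 := by
  have himage : IsCompact (v '' Icc 0 L) := isCompact_Icc.image_of_continuousOn hcont
  have hmin : IsLeast (v '' Icc 0 L) w0 :=
    hw0 ▸ himage.isLeast_sInf ((nonempty_Icc.2 hL.le).image v)
  have hmax : ∀ s ∈ Icc 0 L, v s ≤ w1 := fun s hs =>
    hw1 ▸ le_csSup himage.bddAbove (mem_image_of_mem v hs)
  simp only [← hv]
  exact hI ▸ setIntegral_levelBand_sub_sq_le hmin hmax hderiv hsq hint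

/-- Poincaré-type inequality on a simple C¹-curve parametrized by arc length. -/
theorem poincare_type_curve (L : ℝ) (hL : 0 < L) (d : ℕ) (hd : 2 ≤ d)
    (r r' : ℝ → EuclideanSpace ℝ (Fin d))
    (hr : ∀ s ∈ Icc (0 : ℝ) L, HasDerivAt r (r' s) s)
    (hr' : ContinuousOn r' (Icc (0 : ℝ) L))
    (hunit : ∀ s ∈ Icc (0 : ℝ) L, ‖r' s‖ = 1)
    (w : EuclideanSpace ℝ (Fin d) → ℝ)
    (v v' : ℝ → ℝ) (hv : ∀ s, v s = w (r s))
    (hcont : ContinuousOn v (Icc (0 : ℝ) L))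
    (hderiv : ∀ s ∈ Icc (0 : ℝ) L, HasDerivAt v (v' s) s)
    (hsq : IntegrableOn (fun s => (v' s) ^ 2) (Icc (0 : ℝ) L) volume)
    (hint : IntervalIntegrable v' volume 0 L)
    (w0 w1 : ℝ)
    (hw0 : w0 = sInf (v '' Icc (0 : ℝ) L)) (hw1 : w1 = sSup (v '' Icc (0 : ℝ) L))
    (I : Set ℝ) (hI : I = {s ∈ Icc (0 : ℝ) L | w0 < v s ∧ v s < w1}) :
    ∫ s in I, (w (r s) - w0) ^ 2 ≤ (volume I).toReal ^ 2 * ∫ s in I, |v' s| ^ 2 :=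
  poincare_type_curve_general L hL d r w v v' hv hcont hderiv hsq hint w0 w1 hw0 hw1 I hI
end

section
/- For $t\in(-1,1)$ let $\rho=\rho(t)=\sqrt{1+t^2}$, $y(t)=(2-\rho)^{-2/3}(1+\rho)^{-1/3}$ and $x(t)=t\,y(t)$. Then for every $t\in(-1,1)$, $x'(t)\,y''(t)-y'(t)\,x''(t)=\rho^{-1}\,(2-\rho)^{-10/3}\,(1+\rho)^{-5/3}$. -/
/-!
Since `x = t * y`, the product rule gives `x' y'' - y' x'' = y y'' - 2 y'^2`. With `u = 2 - ρ`,
`v = 1 + ρ` and `ρ' = t / ρ`, differentiating `u^p v^q` lowers both exponents by one and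
multiplies by `(t / ρ) (q u - p v)`; so `y' = t u^(-5/3) v^(-4/3)`, `y''` follows likewise, and
`y y'' - 2 y'^2` reduces to the claimed monomial using only `ρ^2 = 1 + t^2`.
-/

open Set

noncomputable def ρ (t : ℝ) : ℝ := Real.sqrt (1 + t ^ 2)

noncomputable def yfun (t : ℝ) : ℝ :=
  (2 - ρ t) ^ (-(2 : ℝ) / 3) * (1 + ρ t) ^ (-(1 : ℝ) / 3)

noncomputable def xfun (t : ℝ) : ℝ := t * yfun t

open Filter Topology

theorem cross_deriv_of_id_mul {y : ℝ → ℝ} {t : ℝ}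
    (hy : ∀ᶠ s in 𝓝 t, DifferentiableAt ℝ y s) (hy' : DifferentiableAt ℝ (deriv y) t) :
    deriv (fun s => s * y s) t * deriv (deriv y) t
        - deriv y t * deriv (deriv fun s => s * y s) t =
      y t * deriv (deriv y) t - 2 * deriv y t ^ 2 := by
  have hx' : deriv (fun s => s * y s) =ᶠ[𝓝 t] fun s => y s + s * deriv y s := by
    filter_upwards [hy] with s hs
    have h : HasDerivAt (fun s => s * y s) (1 * y s + s * deriv y s) s :=
      (hasDerivAt_id' s).mul hs.hasDerivAt
    rw [h.deriv, one_mul]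
  have hx'' : HasDerivAt (deriv fun s => s * y s) (2 * deriv y t + t * deriv (deriv y) t) t := by
    refine ((hy.self_of_nhds.hasDerivAt.add ((hasDerivAt_id' t).mul hy'.hasDerivAt))
      |>.congr_of_eventuallyEq hx').congr_deriv ?_
    ring
  rw [hx'.self_of_nhds, hx''.deriv]
  ring

theorem rho_pos (t : ℝ) : 0 < ρ t := Real.sqrt_pos.2 (by positivity)

theorem rho_sq (t : ℝ) : ρ t ^ 2 = 1 + t ^ 2 := Real.sq_sqrt (by positivity)

theorem continuous_rho : Continuous ρ := by unfold ρ; fun_prop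

theorem hasDerivAt_rho (t : ℝ) : HasDerivAt ρ (t / ρ t) t := by
  have h := ((hasDerivAt_pow 2 t).const_add 1).sqrt (by positivity : (1 : ℝ) + t ^ 2 ≠ 0)
  refine HasDerivAt.congr_deriv (f := ρ) h ?_
  unfold ρ
  field_simp
  ring

theorem rho_lt_two {t : ℝ} (ht : t ^ 2 < 3) : ρ t < 2 := by
  nlinarith [rho_sq t, rho_pos t]

noncomputable def rhoPow (p q t : ℝ) : ℝ := (2 - ρ t) ^ p * (1 + ρ t) ^ q

section rhoPow

variable {t : ℝ} (hρ : ρ t < 2)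
include hρ

theorem eventually_rho_lt_two : ∀ᶠ s in 𝓝 t, ρ s < 2 :=
  continuous_rho.continuousAt.eventually_lt continuousAt_const hρ

theorem rhoPow_add_one (p q : ℝ) :
    rhoPow (p + 1) (q + 1) t = (2 - ρ t) * (1 + ρ t) * rhoPow p q t := by
  have hv : 0 < 1 + ρ t := by linarith [rho_pos t]
  simp only [rhoPow, Real.rpow_add_one (sub_pos.2 hρ).ne', Real.rpow_add_one hv.ne']
  ring

theorem hasDerivAt_rhoPow (p q : ℝ) :
    HasDerivAt (rhoPow p q)
      (t / ρ t * (q * (2 - ρ t) - p * (1 + ρ t)) * rhoPow (p - 1) (q - 1) t) t := by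
  have hu : 0 < 2 - ρ t := sub_pos.2 hρ
  have hv : 0 < 1 + ρ t := by linarith [rho_pos t]
  have h := (((hasDerivAt_rho t).const_sub 2).rpow_const (p := p) (Or.inl hu.ne')).mul
    (((hasDerivAt_rho t).const_add 1).rpow_const (p := q) (Or.inl hv.ne'))
  refine HasDerivAt.congr_deriv (f := rhoPow p q) h ?_
  rw [rhoPow, ← sub_add_cancel p 1, ← sub_add_cancel q 1, Real.rpow_add_one hu.ne',
    Real.rpow_add_one hv.ne']
  simp only [add_sub_cancel_right]
  ring

theorem rhoPow_mul (p q p' q' : ℝ) :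
    rhoPow p q t * rhoPow p' q' t = rhoPow (p + p') (q + q') t := by
  have hv : 0 < 1 + ρ t := by linarith [rho_pos t]
  simp only [rhoPow, Real.rpow_add (sub_pos.2 hρ), Real.rpow_add hv]
  ring

theorem hasDerivAt_yfun :
    HasDerivAt yfun (t * rhoPow (-(5 : ℝ) / 3) (-(4 : ℝ) / 3) t) t := by
  refine (hasDerivAt_rhoPow hρ (-(2 : ℝ) / 3) (-(1 : ℝ) / 3)).congr_deriv ?_
  rw [show -(2 : ℝ) / 3 - 1 = -5 / 3 by norm_num, show -(1 : ℝ) / 3 - 1 = -4 / 3 by norm_num]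
  field_simp [(rho_pos t).ne']
  ring

theorem hasDerivAt_deriv_yfun :
    HasDerivAt (deriv yfun)
      (rhoPow (-(5 : ℝ) / 3) (-(4 : ℝ) / 3) t
        + t * (t / ρ t * (3 * ρ t - 1) * rhoPow (-(8 : ℝ) / 3) (-(7 : ℝ) / 3) t)) t := by
  have hy' : deriv yfun =ᶠ[𝓝 t] fun s => s * rhoPow (-(5 : ℝ) / 3) (-(4 : ℝ) / 3) s :=
    (eventually_rho_lt_two hρ).mono fun s hs => (hasDerivAt_yfun hs).deriv
  refine ((hasDerivAt_id' t).mul (hasDerivAt_rhoPow hρ _ _)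
    |>.congr_of_eventuallyEq hy').congr_deriv ?_
  rw [show -(5 : ℝ) / 3 - 1 = -8 / 3 by norm_num, show -(4 : ℝ) / 3 - 1 = -7 / 3 by norm_num]
  ring

theorem yfun_mul_sub_two_mul_sq :
    yfun t * (rhoPow (-(5 : ℝ) / 3) (-(4 : ℝ) / 3) t
        + t * (t / ρ t * (3 * ρ t - 1) * rhoPow (-(8 : ℝ) / 3) (-(7 : ℝ) / 3) t))
      - 2 * (t * rhoPow (-(5 : ℝ) / 3) (-(4 : ℝ) / 3) t) ^ 2 =
        (ρ t)⁻¹ * (2 - ρ t) ^ (-(10 : ℝ) / 3) * (1 + ρ t) ^ (-(5 : ℝ) / 3) := by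
  have hA : rhoPow (-(5 : ℝ) / 3) (-(4 : ℝ) / 3) t
      = (2 - ρ t) * (1 + ρ t) * rhoPow (-(8 : ℝ) / 3) (-(7 : ℝ) / 3) t := by
    rw [← rhoPow_add_one hρ]; norm_num
  have hy : yfun t = (2 - ρ t) * (1 + ρ t) * rhoPow (-(5 : ℝ) / 3) (-(4 : ℝ) / 3) t := by
    rw [← rhoPow_add_one hρ]; norm_num [yfun, rhoPow]
  have hW : (2 - ρ t) ^ (-(10 : ℝ) / 3) * (1 + ρ t) ^ (-(5 : ℝ) / 3)
      = (1 + ρ t) * rhoPow (-(5 : ℝ) / 3) (-(4 : ℝ) / 3) t ^ 2 := by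
    rw [sq, rhoPow_mul hρ, show -(5 : ℝ) / 3 = -8 / 3 + 1 by norm_num,
      Real.rpow_add_one (by linarith [rho_pos t])]
    norm_num [rhoPow]
    ring
  rw [mul_assoc _ ((2 - ρ t) ^ _), hW, hy, hA]
  field_simp [(rho_pos t).ne']
  linear_combination -((2 - ρ t) ^ 2 * (1 + ρ t) ^ 2 * rhoPow (-(8 / 3)) (-(7 / 3)) t ^ 2
    * (ρ t - 1)) * rho_sq t

end rhoPow

/-- The curvature numerator `x'y'' - y'x''` of the boundary parametrization. -/
theorem curvature_numerator :
    ∀ t ∈ Ioo (-1 : ℝ) 1,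
      deriv xfun t * deriv (deriv yfun) t - deriv yfun t * deriv (deriv xfun) t =
        (ρ t)⁻¹ * (2 - ρ t) ^ (-(10 : ℝ) / 3) * (1 + ρ t) ^ (-(5 : ℝ) / 3) := by
  intro t ht
  have hρ : ρ t < 2 := rho_lt_two (by nlinarith [ht.1, ht.2])
  have hy' : ∀ᶠ s in 𝓝 t, DifferentiableAt ℝ yfun s :=
    (eventually_rho_lt_two hρ).mono fun s hs => (hasDerivAt_yfun hs).differentiableAt
  have hy'' := hasDerivAt_deriv_yfun hρ
  rw [show xfun = fun s => s * yfun s from rfl, cross_deriv_of_id_mul hy' hy''.differentiableAt,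
    hy''.deriv, (hasDerivAt_yfun hρ).deriv]
  exact yfun_mul_sub_two_mul_sq hρ
end
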